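/- arXiv:2103.14389 — 3 statements merged into one kernel-verified Lean document; each statement's English description precedes it below -/
import Mathlib

section
/- Let (M,d) be a complete geodesic space and f : M → ℝ be geodesically α-convex and L-Lipschitz for some α, L > 0. Then f is geodesically β-expconcave for every β with 0 < β ≤ α/L². -/
/-! Along a geodesic `γ` with `D = d(γ 0, γ 1)`, the function `φ = f ∘ γ` on `[0,1]` satisfies
`φ m ≤ (φ u + φ v)/2 - α D² (u - v)²/8` at the midpoint `m` of `u, v` by `α`-convexity, and
`|φ u - φ v| ≤ L D |u - v|`. Since `β L² ≤ α`, the gap `α D² (u - v)²/8` dominates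
`β (φ u - φ v)²/8`, which is exactly what the bound `(eᵖ + e^q)/2 ≤ exp ((p + q)/2 + (p - q)²/8)`
(that is, `cosh x ≤ exp (x²/2)`) needs to make `exp (-β φ)` midpoint concave. Continuity upgrades
midpoint concavity to concavity: if a continuous midpoint-convex function exceeded its chord, the
leftmost point where the excess is maximal would violate the midpoint inequality. -/

open Real

/-- A constant-speed geodesic parametrized by `[0,1]`. -/
def IsGeodesic {M : Type*} [MetricSpace M] (γ : ℝ → M) : Prop :=
  ∀ s ∈ Set.Icc (0:ℝ) 1, ∀ t ∈ Set.Icc (0:ℝ) 1,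
    dist (γ s) (γ t) = |t - s| * dist (γ 0) (γ 1)

/-- A geodesic metric space: any two points are joined by a geodesic. -/
def GeodesicSpace (M : Type*) [MetricSpace M] : Prop :=
  ∀ x y : M, ∃ γ : ℝ → M, IsGeodesic γ ∧ γ 0 = x ∧ γ 1 = y

/-- Geodesic convexity of a function. -/
def GeodesicallyConvex {M : Type*} [MetricSpace M] (f : M → ℝ) : Prop :=
  ∀ γ : ℝ → M, IsGeodesic γ → ConvexOn ℝ (Set.Icc (0:ℝ) 1) (fun t => f (γ t))

/-- Geodesic concavity of a function. -/
def GeodesicallyConcave {M : Type*} [MetricSpace M] (f : M → ℝ) : Prop :=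
  GeodesicallyConvex (fun x => -f x)

/-- Geodesic `α`-convexity of a function. -/
def GeodesicallyAlphaConvex {M : Type*} [MetricSpace M] (α : ℝ) (f : M → ℝ) : Prop :=
  ∀ γ : ℝ → M, IsGeodesic γ →
    ConvexOn ℝ (Set.Icc (0:ℝ) 1) (fun t => f (γ t) - α / 2 * (dist (γ 0) (γ t))^2)

open Set

theorem Real.midpoint_eq_add_div_two (u v : ℝ) : midpoint ℝ u v = (u + v) / 2 := by
  simp [midpoint_eq_smul_add]; ring

theorem nonpos_of_midpoint_le {g : ℝ → ℝ} {a b : ℝ} (hg : ContinuousOn g (Icc a b))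
    (hmid : ∀ u ∈ Icc a b, ∀ v ∈ Icc a b, g (midpoint ℝ u v) ≤ (g u + g v) / 2)
    (ha : g a ≤ 0) (hb : g b ≤ 0) {t : ℝ} (ht : t ∈ Icc a b) : g t ≤ 0 := by
  by_contra! hpos
  obtain ⟨c, hc, hmax⟩ := isCompact_Icc.exists_isMaxOn ⟨t, ht⟩ hg
  set T := Icc a b ∩ g ⁻¹' {g c}
  have hT : IsCompact T := isCompact_Icc.of_isClosed_subset
    (hg.preimage_isClosed_of_isClosed isClosed_Icc isClosed_singleton) inter_subset_left
  obtain ⟨⟨ht₁a, ht₁b⟩, ht₁max⟩ : sInf T ∈ T := hT.sInf_mem ⟨c, hc, rfl⟩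
  set t₁ := sInf T
  replace ht₁max : g t₁ = g c := ht₁max
  have hgc : 0 < g c := hpos.trans_le (hmax ht)
  have hat₁ : a < t₁ := ht₁a.lt_of_ne fun h => by rw [← h] at ht₁max; linarith
  have ht₁b : t₁ < b := ht₁b.lt_of_ne fun h => by rw [h] at ht₁max; linarith
  set δ := min (t₁ - a) (b - t₁)
  have hδ : 0 < δ := lt_min (by linarith) (by linarith)
  have hu : t₁ - δ ∈ Icc a b := ⟨by linarith [min_le_left (t₁ - a) (b - t₁)], by linarith⟩
  have hv : t₁ + δ ∈ Icc a b := ⟨by linarith, by linarith [min_le_right (t₁ - a) (b - t₁)]⟩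
  have hgu : g (t₁ - δ) < g c := (hmax hu).lt_of_ne fun h =>
    (csInf_le hT.bddBelow ⟨hu, h⟩).not_gt (by linarith)
  have hgv : g (t₁ + δ) ≤ g c := hmax hv
  have := hmid _ hu _ hv
  rw [Real.midpoint_eq_add_div_two, show (t₁ - δ + (t₁ + δ)) / 2 = t₁ by ring] at this
  linarith

theorem Real.exp_add_exp_div_two_le (p q : ℝ) :
    (exp p + exp q) / 2 ≤ exp ((p + q) / 2 + (p - q) ^ 2 / 8) :=
  calc (exp p + exp q) / 2 = exp ((p + q) / 2) * cosh ((p - q) / 2) := by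
        rw [cosh_eq, mul_div_assoc', mul_add, ← exp_add, ← exp_add]; ring_nf
    _ ≤ exp ((p + q) / 2) * exp (((p - q) / 2) ^ 2 / 2) := by gcongr; exact cosh_le_exp_half_sq _
    _ = exp ((p + q) / 2 + (p - q) ^ 2 / 8) := by rw [← exp_add]; ring_nf

section Midpoint

variable {E : Type*} [AddCommGroup E] [Module ℝ E] [TopologicalSpace E] [IsTopologicalAddGroup E]
  [ContinuousSMul ℝ E] {s : Set E}

theorem ContinuousOn.convexOn_of_midpoint_le {k : E → ℝ} (hk : ContinuousOn k s)
    (hs : Convex ℝ s)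
    (hmid : ∀ u ∈ s, ∀ v ∈ s, k (midpoint ℝ u v) ≤ (k u + k v) / 2) : ConvexOn ℝ s k := by
  refine ⟨hs, fun x hx y hy a b ha hb hab => ?_⟩
  let ℓ : ℝ →ᵃ[ℝ] E := AffineMap.lineMap x y
  let ℓk : ℝ →ᵃ[ℝ] ℝ := AffineMap.lineMap (k x) (k y)
  have hℓ : MapsTo ℓ (Icc 0 1) s := fun t ht => hs.lineMap_mem hx hy ht
  have hgap := nonpos_of_midpoint_le (g := fun t => k (ℓ t) - ℓk t) (a := 0) (b := 1)
    ((hk.comp AffineMap.lineMap_continuous.continuousOn hℓ).sub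
      AffineMap.lineMap_continuous.continuousOn)
    (fun u hu v hv => by
      have := hmid _ (hℓ hu) _ (hℓ hv)
      simp only [AffineMap.map_midpoint, Real.midpoint_eq_add_div_two (ℓk u)]
      linarith)
    (by simp [ℓ, ℓk]) (by simp [ℓ, ℓk]) ⟨hb, by linarith⟩
  simp only [ℓ, ℓk, AffineMap.lineMap_apply_module, ← hab, add_sub_cancel_right,
    smul_eq_mul] at hgap
  rw [smul_eq_mul, smul_eq_mul]
  linarith

theorem ContinuousOn.convexOn_neg_exp_neg_mul {φ : E → ℝ} (hφ : ContinuousOn φ s)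
    (hs : Convex ℝ s) {β : ℝ} (hβ : 0 ≤ β)
    (hmid : ∀ u ∈ s, ∀ v ∈ s,
      φ (midpoint ℝ u v) ≤ (φ u + φ v) / 2 - β * (φ u - φ v) ^ 2 / 8) :
    ConvexOn ℝ s fun x => -exp (-β * φ x) := by
  have hc : ContinuousOn (fun x => -exp (-β * φ x)) s := by fun_prop
  refine hc.convexOn_of_midpoint_le hs fun u hu v hv => ?_
  have hexp : (exp (-β * φ u) + exp (-β * φ v)) / 2 ≤ exp (-β * φ (midpoint ℝ u v)) := by
    refine (Real.exp_add_exp_div_two_le _ _).trans (exp_le_exp.mpr ?_)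
    nlinarith [mul_le_mul_of_nonneg_left (hmid u hu v hv) hβ]
  linarith

end Midpoint

theorem ConvexOn.midpoint_le_sub_sq {s : Set ℝ} {φ : ℝ → ℝ} {κ u v : ℝ}
    (h : ConvexOn ℝ s fun t => φ t - κ / 2 * t ^ 2) (hu : u ∈ s) (hv : v ∈ s) :
    φ (midpoint ℝ u v) ≤ (φ u + φ v) / 2 - κ * (u - v) ^ 2 / 8 := by
  have := h.2 hu hv (by norm_num : (0:ℝ) ≤ 1 / 2) (by norm_num : (0:ℝ) ≤ 1 / 2) (by norm_num)
  simp only [smul_eq_mul] at this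
  rw [Real.midpoint_eq_add_div_two, show (u + v) / 2 = 1 / 2 * u + 1 / 2 * v by ring]
  linarith

section Geodesic

variable {M : Type*} [MetricSpace M] {γ : ℝ → M}

theorem IsGeodesic.dist_zero_apply (hγ : IsGeodesic γ) {t : ℝ} (ht : t ∈ Icc 0 1) :
    dist (γ 0) (γ t) = t * dist (γ 0) (γ 1) := by
  rw [hγ 0 (left_mem_Icc.mpr zero_le_one) t ht, sub_zero, abs_of_nonneg ht.1]

theorem IsGeodesic.continuousOn (hγ : IsGeodesic γ) : ContinuousOn γ (Icc 0 1) :=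
  (LipschitzOnWith.of_dist_le' (K := dist (γ 0) (γ 1)) fun s hs t ht => by
    rw [hγ s hs t ht, Real.dist_eq, abs_sub_comm, mul_comm]).continuousOn

theorem GeodesicallyAlphaConvex.convexOn_sub_sq {α : ℝ} {f : M → ℝ}
    (hf : GeodesicallyAlphaConvex α f) (hγ : IsGeodesic γ) :
    ConvexOn ℝ (Icc 0 1) fun t => f (γ t) - α * dist (γ 0) (γ 1) ^ 2 / 2 * t ^ 2 :=
  (hf γ hγ).congr fun t ht => by simp only [hγ.dist_zero_apply ht]; ring

end Geodesic

theorem strongConvex_lipschitz_implies_expconcave_general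
    {M : Type*} [MetricSpace M]
    (f : M → ℝ) (α L : ℝ) (hL : 0 < L)
    (hconv : GeodesicallyAlphaConvex α f)
    (hlip : ∀ x y : M, |f x - f y| ≤ L * dist x y) :
    ∀ β : ℝ, 0 < β → β ≤ α / L^2 →
      GeodesicallyConcave (fun x => Real.exp (-β * f x)) := by
  intro β hβ hβα γ hγ
  set D := dist (γ 0) (γ 1)
  have hβL : β * L ^ 2 ≤ α := (le_div_iff₀ (by positivity)).mp hβα
  have hf : Continuous f := (LipschitzWith.of_dist_le' hlip).continuous
  refine (hf.comp_continuousOn hγ.continuousOn).convexOn_neg_exp_neg_mul (convex_Icc 0 1) hβ.le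
    fun u hu v hv => ?_
  have hsq : (f (γ u) - f (γ v)) ^ 2 ≤ L ^ 2 * D ^ 2 * (u - v) ^ 2 :=
    calc (f (γ u) - f (γ v)) ^ 2 = |f (γ u) - f (γ v)| ^ 2 := (sq_abs _).symm
      _ ≤ (L * (|v - u| * D)) ^ 2 := by
        rw [← hγ u hu v hv]; exact pow_le_pow_left₀ (abs_nonneg _) (hlip _ _) 2
      _ = L ^ 2 * D ^ 2 * (u - v) ^ 2 := by rw [mul_pow, mul_pow, sq_abs]; ring
  calc f (γ (midpoint ℝ u v))
      ≤ (f (γ u) + f (γ v)) / 2 - α * D ^ 2 * (u - v) ^ 2 / 8 :=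
        (hconv.convexOn_sub_sq hγ).midpoint_le_sub_sq hu hv
    _ ≤ (f (γ u) + f (γ v)) / 2 - β * (f (γ u) - f (γ v)) ^ 2 / 8 := by
        nlinarith [mul_le_mul_of_nonneg_left hsq hβ.le,
          mul_le_mul_of_nonneg_right hβL (by positivity : 0 ≤ D ^ 2 * (u - v) ^ 2)]

/-- A geodesically `α`-convex, `L`-Lipschitz function on a complete geodesic space is
geodesically `β`-expconcave for every `0 < β ≤ α / L²`. -/
theorem strongConvex_lipschitz_implies_expconcave
    {M : Type*} [MetricSpace M] [CompleteSpace M] (hM : GeodesicSpace M)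
    (f : M → ℝ) (α L : ℝ) (hα : 0 < α) (hL : 0 < L)
    (hconv : GeodesicallyAlphaConvex α f)
    (hlip : ∀ x y : M, |f x - f y| ≤ L * dist x y) :
    ∀ β : ℝ, 0 < β → β ≤ α / L^2 →
      GeodesicallyConcave (fun x => Real.exp (-β * f x)) :=
  strongConvex_lipschitz_implies_expconcave_general f α L hL hconv hlip
end

section
/- For all r ≥ 0 and all ε ∈ (0, 1/2], sinh(εr) ≥ ε·ψ(r)·sinh(r), where ψ(r) := (r·coth r)·exp(-r·coth r) for r > 0 and ψ(0) := e^{-1}. -/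
open Real

/-- `ψ(r) = (r coth r) exp(-(r coth r))` for `r > 0`, extended by `ψ(0) = e⁻¹`. -/
noncomputable def psi (r : ℝ) : ℝ :=
  if r = 0 then Real.exp (-1)
  else (r * Real.cosh r / Real.sinh r) * Real.exp (-(r * Real.cosh r / Real.sinh r))

/-!
Since `ψ(r) sinh r = r cosh r · exp(-r coth r)` and `cosh r ≤ eʳ ≤ exp(r coth r)`, we get
`ψ(r) sinh r ≤ r`; hence `ε ψ(r) sinh r ≤ εr ≤ sinh(εr)`.
-/

namespace Real

lemma cosh_le_exp_of_nonneg {x : ℝ} (hx : 0 ≤ x) : cosh x ≤ exp x := by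
  rw [← cosh_add_sinh x]
  linarith [sinh_nonneg_iff.2 hx]

lemma self_le_mul_cosh_div_sinh {x : ℝ} (hx : 0 < x) : x ≤ x * cosh x / sinh x := by
  rw [le_div_iff₀ (sinh_pos_iff.2 hx)]
  exact mul_le_mul_of_nonneg_left (sinh_lt_cosh x).le hx.le

end Real

lemma psi_mul_sinh_le {r : ℝ} (hr : 0 ≤ r) : psi r * sinh r ≤ r := by
  rcases hr.eq_or_lt with rfl | hr0
  · simp
  set f := r * cosh r / sinh r with hf
  have hpsi : psi r * sinh r = r * (cosh r * exp (-f)) := by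
    rw [psi, if_neg hr0.ne', hf]
    field_simp [(sinh_pos_iff.2 hr0).ne']
  have hcosh : cosh r * exp (-f) ≤ 1 :=
    calc cosh r * exp (-f) ≤ exp r * exp (-r) := by
          gcongr
          · exact cosh_le_exp_of_nonneg hr
          · exact self_le_mul_cosh_div_sinh hr0
      _ = 1 := by rw [← exp_add, add_neg_cancel, exp_zero]
  rw [hpsi]
  exact mul_le_of_le_one_right hr hcosh

/-- For all `r ≥ 0` and `ε ∈ (0, 1/2]`, `sinh (ε r) ≥ ε ψ(r) sinh r`. -/
theorem sinh_scaling_lower_bound (r ε : ℝ) (hr : 0 ≤ r) (hε : ε ∈ Set.Ioc (0:ℝ) (1/2)) :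
    Real.sinh (ε * r) ≥ ε * psi r * Real.sinh r :=
  calc ε * psi r * sinh r = ε * (psi r * sinh r) := mul_assoc _ _ _
    _ ≤ ε * r := mul_le_mul_of_nonneg_left (psi_mul_sinh_le hr) hε.1.le
    _ ≤ sinh (ε * r) := self_le_sinh_iff.2 (mul_nonneg hε.1.le hr)
end

section
/- (Regret bound for Lipschitz expconcave losses under a ball-measure lower bound) Assume barycenters exist, Jensen's inequality holds for geodesically convex functions at barycenters, m(B(x,r)) ≥ c(x)r^p for all x and r ∈ (0, r_0], and every loss ℓ_t is geodesically β-expconcave and L-Lipschitz. Then the EWB forecaster with constant parameter β has regret R_n ≤ L + (1/β)ln(1/c(x*_n)) + (p ln n)/β for all n ≥ 1/r_0, where x*_n minimizes Σ_{t=1}^n ℓ_t. -/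
open Real MeasureTheory

/-! By expconcavity and Jensen's inequality at the barycenter, the loss of the forecaster in
round `t` is at most the mix loss `-(1/β) log ∫ e^{-β ℓ_t} dμ_t`. The weights `μ_{t+1}` are the
exponential tilt of `m` by `-β L_t`, where `L_t = ℓ_1 + ⋯ + ℓ_t`, so the normalising constants
telescope and the mix losses add up to `-(1/β) log ∫ e^{-β L_n} dm`. On the ball `B(x*, 1/n)`
the Lipschitz bound gives `L_n ≤ L_n(x*) + L`, and the ball has mass at least `c(x*) n^{-p}`;
this bounds the integral from below. -/

section Tilting

variable {α : Type*} [MeasurableSpace α] {m : Measure α} [IsProbabilityMeasure m]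
  {f : ℕ → α → ℝ} {μ : ℕ → Measure α}

theorem integrable_exp_sum_and_eq_tilted (hμ1 : μ 1 = m)
    (hrec : ∀ t, 1 ≤ t → μ (t + 1) = (μ t).tilted (f t))
    (hint : ∀ t, Integrable (fun x => exp (f t x)) (μ t)) (k : ℕ) :
    Integrable (fun x => exp (∑ t ∈ Finset.Icc 1 k, f t x)) m ∧
      μ (k + 1) = m.tilted (fun x => ∑ t ∈ Finset.Icc 1 k, f t x) := by
  induction k with
  | zero => simp [hμ1]
  | succ k ih =>
    obtain ⟨hint_k, hμk⟩ := ih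
    have hsum (x : α) : ∑ t ∈ Finset.Icc 1 (k + 1), f t x
        = ∑ t ∈ Finset.Icc 1 k, f t x + f (k + 1) x :=
      Finset.sum_Icc_succ_top (by omega) _
    refine ⟨?_, ?_⟩
    · have h := (integrable_tilted_iff hint_k _).1 (hμk ▸ hint (k + 1))
      simpa only [hsum, exp_add, smul_eq_mul] using h
    · rw [hrec (k + 1) (by omega), hμk, tilted_tilted hint_k]
      simp only [hsum]
      rfl

theorem prod_integral_exp_eq_integral_exp_sum (hμ1 : μ 1 = m)
    (hrec : ∀ t, 1 ≤ t → μ (t + 1) = (μ t).tilted (f t))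
    (hint : ∀ t, Integrable (fun x => exp (f t x)) (μ t)) (k : ℕ) :
    ∏ t ∈ Finset.Icc 1 k, ∫ x, exp (f t x) ∂μ t
      = ∫ x, exp (∑ t ∈ Finset.Icc 1 k, f t x) ∂m := by
  induction k with
  | zero => simp
  | succ k ih =>
    obtain ⟨hint_k, hμk⟩ := integrable_exp_sum_and_eq_tilted hμ1 hrec hint k
    rw [Finset.prod_Icc_succ_top (by omega), ih, hμk, integral_exp_tilted,
      mul_div_cancel₀ _ (integral_exp_pos hint_k).ne']
    simp [Finset.sum_Icc_succ_top]

end Tilting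

noncomputable def mixLoss {α : Type*} [MeasurableSpace α] (β : ℝ) (ν : Measure α) (f : α → ℝ) :
    ℝ :=
  -(1 / β) * log (∫ x, exp (-β * f x) ∂ν)

theorem le_mixLoss_of_jensen {M : Type*} [MetricSpace M] [MeasurableSpace M] {ν : Measure M}
    [NeZero ν] {β : ℝ} (hβ : 0 < β) {f : M → ℝ} {x : M}
    (hexp : GeodesicallyConcave fun y => exp (-β * f y))
    (hint : Integrable (fun y => exp (-β * f y)) ν)
    (hjensen : ∀ g : M → ℝ, GeodesicallyConvex g → Integrable g ν → g x ≤ ∫ y, g y ∂ν) :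
    f x ≤ mixLoss β ν f := by
  have hZ : ∫ y, exp (-β * f y) ∂ν ≤ exp (-β * f x) := by
    have h := hjensen _ hexp hint.neg
    rw [integral_neg] at h
    linarith
  calc f x = -(1 / β) * log (exp (-β * f x)) := by rw [log_exp]; field_simp
    _ ≤ mixLoss β ν f :=
      mul_le_mul_of_nonpos_left (log_le_log (integral_exp_pos hint) hZ) (by simp [hβ.le])

theorem mixLoss_le_of_forall_le_on {α : Type*} [MeasurableSpace α] {ν : Measure α}
    [IsFiniteMeasure ν] {β : ℝ} (hβ : 0 < β) {f : α → ℝ}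
    (hint : Integrable (fun y => exp (-β * f y)) ν) {s : Set α} {a b : ℝ} (ha : 0 < a)
    (has : a ≤ ν.real s) (hf : ∀ y ∈ s, f y ≤ b) :
    mixLoss β ν f ≤ b - (1 / β) * log a := by
  have hmass : exp (-β * b) * a ≤ ∫ y, exp (-β * f y) ∂ν := calc
    exp (-β * b) * a ≤ exp (-β * b) * ν.real {y | exp (-β * b) ≤ exp (-β * f y)} := by
      refine mul_le_mul_of_nonneg_left (has.trans (measureReal_mono fun y hy => ?_)) (exp_pos _).le
      simpa [hβ] using hf y hy
    _ ≤ ∫ y, exp (-β * f y) ∂ν :=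
      mul_meas_ge_le_integral_of_nonneg (ae_of_all _ fun _ => (exp_pos _).le) hint _
  have hlog := log_le_log (by positivity) hmass
  rw [log_mul (exp_pos _).ne' ha.ne', log_exp] at hlog
  calc mixLoss β ν f ≤ -(1 / β) * (-β * b + log a) :=
        mul_le_mul_of_nonpos_left hlog (by simp [hβ.le])
    _ = b - (1 / β) * log a := by field_simp; ring

theorem sum_mixLoss_eq_mixLoss_sum {α : Type*} [MeasurableSpace α] {m : Measure α}
    [IsProbabilityMeasure m] {β : ℝ} {ℓ : ℕ → α → ℝ} {μ : ℕ → Measure α} [∀ t, NeZero (μ t)]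
    (hμ1 : μ 1 = m) (hrec : ∀ t, 1 ≤ t → μ (t + 1) = (μ t).tilted fun x => -β * ℓ t x)
    (hint : ∀ t, Integrable (fun x => exp (-β * ℓ t x)) (μ t)) (k : ℕ) :
    ∑ t ∈ Finset.Icc 1 k, mixLoss β (μ t) (ℓ t)
      = mixLoss β m fun x => ∑ t ∈ Finset.Icc 1 k, ℓ t x := by
  unfold mixLoss
  rw [← Finset.mul_sum, ← log_prod fun t _ => (integral_exp_pos (hint t)).ne',
    prod_integral_exp_eq_integral_exp_sum hμ1 hrec hint]
  simp only [Finset.mul_sum]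

theorem sum_le_sum_add_card_mul_of_abs_sub_le {ι X : Type*} [PseudoMetricSpace X]
    {ℓ : ι → X → ℝ} {L r : ℝ} (hL : 0 ≤ L) (hlip : ∀ t x y, |ℓ t x - ℓ t y| ≤ L * dist x y)
    (s : Finset ι) {x y : X} (hxy : dist y x ≤ r) :
    ∑ t ∈ s, ℓ t y ≤ ∑ t ∈ s, ℓ t x + s.card * (L * r) := by
  rw [← nsmul_eq_mul, ← Finset.sum_const, ← Finset.sum_add_distrib]
  refine Finset.sum_le_sum fun t _ => ?_
  linarith [(le_abs_self _).trans (hlip t y x), mul_le_mul_of_nonneg_left hxy hL]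

theorem ewb_regret_lipschitz_expconcave_general
    {M : Type*} [MetricSpace M] [MeasurableSpace M]
    (m : Measure M) [IsProbabilityMeasure m]
    (β L p r₀ : ℝ) (hβ : 0 < β) (hLpos : 0 < L) (hr₀ : 0 < r₀)
    (c : M → ℝ) (hc : ∀ x, 0 < c x)
    -- ball-measure lower bound
    (hball : ∀ (x : M), ∀ r ∈ Set.Ioc (0:ℝ) r₀,
      c x * r ^ p ≤ (m (Metric.ball x r)).toReal)
    -- the losses: geodesically β-expconcave and L-Lipschitz
    (ℓ : ℕ → M → ℝ)
    (hexp : ∀ t, GeodesicallyConcave (fun x => Real.exp (-β * ℓ t x)))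
    (hlip : ∀ t (x y : M), |ℓ t x - ℓ t y| ≤ L * dist x y)
    -- the exponential-weights measures: m₁ = m, dm_{t+1} ∝ e^{-β ℓ_t} dm_t
    (μ : ℕ → Measure M) (hprob : ∀ t, IsProbabilityMeasure (μ t))
    (hμ1 : μ 1 = m)
    (hrec : ∀ t, 1 ≤ t → μ (t + 1) = (μ t).withDensity
      (fun x => ENNReal.ofReal
        (Real.exp (-β * ℓ t x) / ∫ y, Real.exp (-β * ℓ t y) ∂(μ t))))
    -- integrability assumptions
    (hint : ∀ t, Integrable (fun x => Real.exp (-β * ℓ t x)) (μ t))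
    -- the EWB forecaster: x t is a barycenter of μ t
    (x : ℕ → M)
    -- Jensen's inequality at barycenters for geodesically convex functions
    (hjensen : ∀ (t : ℕ) (f : M → ℝ), GeodesicallyConvex f → Integrable f (μ t) →
      f (x t) ≤ ∫ y, f y ∂(μ t))
    -- horizon and the best point in hindsight
    (n : ℕ) (hn : (1:ℝ) / r₀ ≤ n)
    (xstar : M) :
    (∑ t ∈ Finset.Icc 1 n, ℓ t (x t)) - (∑ t ∈ Finset.Icc 1 n, ℓ t xstar)
      ≤ L + (1 / β) * Real.log (1 / c xstar) + p * Real.log n / β := by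
  have hn0 : 0 < (n : ℝ) := (one_div_pos.2 hr₀).trans_le hn
  have hr : (n : ℝ)⁻¹ ∈ Set.Ioc 0 r₀ := ⟨inv_pos.2 hn0, by rwa [inv_le_comm₀ hn0 hr₀, ← one_div]⟩
  set S : M → ℝ := fun y => ∑ t ∈ Finset.Icc 1 n, ℓ t y
  have hS : ∀ y ∈ Metric.ball xstar (n : ℝ)⁻¹, S y ≤ S xstar + L := fun y hy => by
    have h := sum_le_sum_add_card_mul_of_abs_sub_le hLpos.le hlip (Finset.Icc 1 n)
      (Metric.mem_ball.1 hy).le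
    rwa [Nat.card_Icc, Nat.add_sub_cancel, mul_left_comm, mul_inv_cancel₀ hn0.ne', mul_one] at h
  -- `hrec` says `μ (t + 1) = (μ t).tilted (-β * ℓ t)`, with `Measure.tilted` unfolded
  have hintS : Integrable (fun y => exp (-β * S y)) m := by
    simpa only [S, Finset.mul_sum] using (integrable_exp_sum_and_eq_tilted hμ1 hrec hint n).1
  calc ∑ t ∈ Finset.Icc 1 n, ℓ t (x t) - S xstar
      ≤ ∑ t ∈ Finset.Icc 1 n, mixLoss β (μ t) (ℓ t) - S xstar := by
        gcongr with t
        exact le_mixLoss_of_jensen hβ (hexp t) (hint t) (hjensen t)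
    _ = mixLoss β m S - S xstar := by rw [sum_mixLoss_eq_mixLoss_sum hμ1 hrec hint]
    _ ≤ S xstar + L - (1 / β) * log (c xstar * (n : ℝ)⁻¹ ^ p) - S xstar := by
        gcongr
        exact mixLoss_le_of_forall_le_on hβ hintS (by have := hc xstar; positivity)
          (hball xstar _ hr) hS
    _ = L + (1 / β) * log (1 / c xstar) + p * log n / β := by
        rw [log_mul (hc xstar).ne' (by positivity), log_rpow (inv_pos.2 hn0), log_inv,
          one_div (c xstar), log_inv]
        ring

/-- Regret bound for the EWB forecaster with geodesically `β`-expconcave `L`-Lipschitz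
losses, under the ball-measure lower bound `m(B(x,r)) ≥ c(x) r^p`:
`R_n ≤ L + (1/β) ln(1/c(x*_n)) + (p ln n)/β` for all `n ≥ 1/r₀`. -/
theorem ewb_regret_lipschitz_expconcave
    {M : Type*} [MetricSpace M] [MeasurableSpace M] [BorelSpace M]
    (hgeo : GeodesicSpace M)
    (m : Measure M) [IsProbabilityMeasure m]
    (β L p r₀ : ℝ) (hβ : 0 < β) (hLpos : 0 < L) (hp : 0 < p) (hr₀ : 0 < r₀)
    (c : M → ℝ) (hc : ∀ x, 0 < c x)
    -- ball-measure lower bound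
    (hball : ∀ (x : M), ∀ r ∈ Set.Ioc (0:ℝ) r₀,
      c x * r ^ p ≤ (m (Metric.ball x r)).toReal)
    -- the losses: geodesically β-expconcave and L-Lipschitz
    (ℓ : ℕ → M → ℝ) (hmeas : ∀ t, Measurable (ℓ t))
    (hexp : ∀ t, GeodesicallyConcave (fun x => Real.exp (-β * ℓ t x)))
    (hlip : ∀ t (x y : M), |ℓ t x - ℓ t y| ≤ L * dist x y)
    -- the exponential-weights measures: m₁ = m, dm_{t+1} ∝ e^{-β ℓ_t} dm_t
    (μ : ℕ → Measure M) (hprob : ∀ t, IsProbabilityMeasure (μ t))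
    (hμ1 : μ 1 = m)
    (hrec : ∀ t, 1 ≤ t → μ (t + 1) = (μ t).withDensity
      (fun x => ENNReal.ofReal
        (Real.exp (-β * ℓ t x) / ∫ y, Real.exp (-β * ℓ t y) ∂(μ t))))
    -- integrability assumptions
    (hint : ∀ t, Integrable (fun x => Real.exp (-β * ℓ t x)) (μ t))
    (hintℓ : ∀ t s, Integrable (ℓ t) (μ s))
    (hintm : ∀ t, Integrable (ℓ t) m)
    -- the EWB forecaster: x t is a barycenter of μ t
    (x : ℕ → M)
    (hx : ∀ t y, (∫ z, dist (x t) z ^ 2 ∂(μ t)) ≤ ∫ z, dist y z ^ 2 ∂(μ t))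
    -- Jensen's inequality at barycenters for geodesically convex functions
    (hjensen : ∀ (t : ℕ) (f : M → ℝ), GeodesicallyConvex f → Integrable f (μ t) →
      f (x t) ≤ ∫ y, f y ∂(μ t))
    -- horizon and the best point in hindsight
    (n : ℕ) (hn : (1:ℝ) / r₀ ≤ n)
    (xstar : M) (hxstar : ∀ y : M,
      (∑ t ∈ Finset.Icc 1 n, ℓ t xstar) ≤ ∑ t ∈ Finset.Icc 1 n, ℓ t y) :
    (∑ t ∈ Finset.Icc 1 n, ℓ t (x t)) - (∑ t ∈ Finset.Icc 1 n, ℓ t xstar)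
      ≤ L + (1 / β) * Real.log (1 / c xstar) + p * Real.log n / β :=
  ewb_regret_lipschitz_expconcave_general m β L p r₀ hβ hLpos hr₀ c hc hball ℓ hexp hlip μ hprob hμ1
    hrec hint x hjensen n hn xstar
end
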